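/- Let A : ℝ^m → ℝ^{n×p} and b : ℝ^m → ℝ^n be Lipschitz linear maps with ‖A(u)‖_op ≤ W for all u in a compact set U, and let f : ℝ^p → ℝ^n be C¹ with L_f-Lipschitz derivative and bounded derivative ‖Df‖ ≤ D on a bounded set X ⊆ ℝ^p. Define Λ(x,u) = f(A(u)x + b(u)). Then there is a constant C such that for all x,y ∈ X and u,v ∈ U: ‖∂_x Λ(x,u) − ∂_x Λ(y,v)‖_op ≤ C(W²‖x−y‖ + W‖y‖‖u−v‖ + ‖u−v‖). -/

import Mathlib

/-!
The chain rule gives `∂ₓΛ(x,u) = Df(A(u)x + b(u)) ∘ A(u)`. Splitting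
`P ∘ A - Q ∘ B = (P - Q) ∘ A + Q ∘ (A - B)`, the first term is controlled by the Lipschitz
constant of `Df` times the distance of the two pre-activations, which is at most
`‖A(u)‖‖x - y‖ + ‖A(u) - A(v)‖‖y‖ + ‖b(u) - b(v)‖`, and the second by `‖Df‖` times the
Lipschitz constant of `A`. Collecting terms gives the three summands of the bound.
-/

section

variable {𝕜 : Type*} [NontriviallyNormedField 𝕜]
  {E F G M : Type*} [NormedAddCommGroup E] [NormedSpace 𝕜 E] [NormedAddCommGroup F]
  [NormedSpace 𝕜 F] [NormedAddCommGroup G] [NormedSpace 𝕜 G] [SeminormedAddCommGroup M]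

theorem fderiv_comp_affine {f : F → G} (L : E →L[𝕜] F) (c : F) {x : E}
    (hf : DifferentiableAt 𝕜 f (L x + c)) :
    fderiv 𝕜 (fun z => f (L z + c)) x = (fderiv 𝕜 f (L x + c)).comp L :=
  (hf.hasFDerivAt.comp x (L.hasFDerivAt.add_const c)).fderiv

theorem ContinuousLinearMap.norm_comp_sub_comp_le (P Q : F →L[𝕜] G) (S T : E →L[𝕜] F) :
    ‖P.comp S - Q.comp T‖ ≤ ‖P - Q‖ * ‖S‖ + ‖Q‖ * ‖S - T‖ := by
  have hsplit : P.comp S - Q.comp T = (P - Q).comp S + Q.comp (S - T) := by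
    ext z
    simp
  rw [hsplit]
  exact (norm_add_le _ _).trans
    (add_le_add (opNorm_comp_le _ _) (opNorm_comp_le _ _))

theorem ContinuousLinearMap.norm_apply_sub_apply_le (S T : E →L[𝕜] F) (x y : E) :
    ‖S x - T y‖ ≤ ‖S‖ * ‖x - y‖ + ‖S - T‖ * ‖y‖ := by
  have hsplit : S x - T y = S (x - y) + (S - T) y := by simp
  rw [hsplit]
  exact (norm_add_le _ _).trans (add_le_add (S.le_opNorm _) ((S - T).le_opNorm _))

theorem norm_affine_apply_sub_le {A : M → E →L[𝕜] F} {b : M → F} {KA Kb : NNReal}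
    (hA : LipschitzWith KA A) (hb : LipschitzWith Kb b) (x y : E) (u v : M) :
    ‖(A u x + b u) - (A v y + b v)‖
      ≤ ‖A u‖ * ‖x - y‖ + KA * ‖u - v‖ * ‖y‖ + Kb * ‖u - v‖ := by
  calc ‖(A u x + b u) - (A v y + b v)‖ = ‖(A u x - A v y) + (b u - b v)‖ := by
        rw [add_sub_add_comm]
    _ ≤ ‖A u‖ * ‖x - y‖ + ‖A u - A v‖ * ‖y‖ + ‖b u - b v‖ :=
        (norm_add_le _ _).trans
          (add_le_add_left ((A u).norm_apply_sub_apply_le (A v) x y) _)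
    _ ≤ ‖A u‖ * ‖x - y‖ + KA * ‖u - v‖ * ‖y‖ + Kb * ‖u - v‖ := by
        gcongr
        · exact hA.norm_sub_le u v
        · exact hb.norm_sub_le u v

theorem norm_fderiv_comp_affine_sub_le {A : M → E →L[𝕜] F} {b : M → F} {f : F → G}
    {KA Kb Lf : NNReal} (hA : LipschitzWith KA A) (hb : LipschitzWith Kb b)
    (hf : Differentiable 𝕜 f) (hLf : LipschitzWith Lf (fderiv 𝕜 f)) (x y : E) (u v : M) :
    ‖fderiv 𝕜 (fun z => f (A u z + b u)) x - fderiv 𝕜 (fun z => f (A v z + b v)) y‖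
      ≤ Lf * (‖A u‖ * ‖x - y‖ + KA * ‖u - v‖ * ‖y‖ + Kb * ‖u - v‖) * ‖A u‖
        + ‖fderiv 𝕜 f (A v y + b v)‖ * (KA * ‖u - v‖) := by
  rw [fderiv_comp_affine _ _ (hf _), fderiv_comp_affine _ _ (hf _)]
  refine ((fderiv 𝕜 f _).norm_comp_sub_comp_le _ _ _).trans ?_
  gcongr
  · exact (hLf.norm_sub_le _ _).trans
      (mul_le_mul_of_nonneg_left (norm_affine_apply_sub_le hA hb x y u v) Lf.coe_nonneg)
  · exact hA.norm_sub_le u v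

theorem norm_fderiv_comp_affine_sub_le_of_le {A : M → E →L[𝕜] F} {b : M → F} {f : F → G}
    {KA Kb Lf : NNReal} {W D : ℝ} (hA : LipschitzWith KA A) (hb : LipschitzWith Kb b)
    (hf : Differentiable 𝕜 f) (hLf : LipschitzWith Lf (fderiv 𝕜 f)) {x y : E} {u v : M}
    (hWu : ‖A u‖ ≤ W) (hDy : ‖fderiv 𝕜 f (A v y + b v)‖ ≤ D) :
    ‖fderiv 𝕜 (fun z => f (A u z + b u)) x - fderiv 𝕜 (fun z => f (A v z + b v)) y‖
      ≤ (Lf * (1 + KA + Kb * W) + D * KA)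
        * (W ^ 2 * ‖x - y‖ + W * ‖y‖ * ‖u - v‖ + ‖u - v‖) := by
  have hW0 : 0 ≤ W := (norm_nonneg _).trans hWu
  have hD0 : 0 ≤ D := (norm_nonneg _).trans hDy
  calc _ ≤ Lf * (W * ‖x - y‖ + KA * ‖u - v‖ * ‖y‖ + Kb * ‖u - v‖) * W
          + D * (KA * ‖u - v‖) :=
        (norm_fderiv_comp_affine_sub_le hA hb hf hLf x y u v).trans (by gcongr)
    _ = Lf * (W ^ 2 * ‖x - y‖) + Lf * KA * (W * ‖y‖ * ‖u - v‖)
          + (Lf * Kb * W + D * KA) * ‖u - v‖ := by ring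
    _ ≤ (Lf * (1 + KA + Kb * W) + D * KA)
          * (W ^ 2 * ‖x - y‖ + W * ‖y‖ * ‖u - v‖ + ‖u - v‖) := by
        have h₁ : 0 ≤ (Lf * (KA + Kb * W) + D * KA) * (W ^ 2 * ‖x - y‖) := by positivity
        have h₂ : 0 ≤ (Lf * (1 + Kb * W) + D * KA) * (W * ‖y‖ * ‖u - v‖) := by positivity
        have h₃ : 0 ≤ Lf * (1 + KA) * ‖u - v‖ := by positivity
        linear_combination h₁ + h₂ + h₃

end

theorem stmt_18_general (m p : ℕ)
    (A : EuclideanSpace ℝ (Fin m) →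
      (EuclideanSpace ℝ (Fin p) →L[ℝ] EuclideanSpace ℝ (Fin p)))
    (b : EuclideanSpace ℝ (Fin m) → EuclideanSpace ℝ (Fin p))
    (f : EuclideanSpace ℝ (Fin p) → EuclideanSpace ℝ (Fin p))
    (U : Set (EuclideanSpace ℝ (Fin m)))
    (X : Set (EuclideanSpace ℝ (Fin p)))
    (KA Kb Lf : NNReal) (W D : ℝ)
    (hA : LipschitzWith KA A) (hb : LipschitzWith Kb b)
    (hW : ∀ u ∈ U, ‖A u‖ ≤ W)
    (hfC1 : ContDiff ℝ 1 f)
    (hLf : LipschitzWith Lf (fderiv ℝ f))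
    (hD : ∀ u ∈ U, ∀ x ∈ X, ‖fderiv ℝ f (A u x + b u)‖ ≤ D) :
    ∃ C > (0 : ℝ), ∀ x ∈ X, ∀ y ∈ X, ∀ u ∈ U, ∀ v ∈ U,
      ‖fderiv ℝ (fun z => f (A u z + b u)) x -
        fderiv ℝ (fun z => f (A v z + b v)) y‖
        ≤ C * (W ^ 2 * ‖x - y‖ + W * ‖y‖ * ‖u - v‖ + ‖u - v‖) := by
  -- `C` is chosen before any `u ∈ U` certifies `0 ≤ W` and `0 ≤ D`, hence the absolute values.
  refine ⟨Lf * (1 + KA + Kb * |W|) + |D| * KA + 1, by positivity, ?_⟩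
  intro x _ y hy u hu v hv
  have hWu : ‖A u‖ ≤ W := hW u hu
  have hDy : ‖fderiv ℝ f (A v y + b v)‖ ≤ D := hD v hv y hy
  have hW0 : 0 ≤ W := (norm_nonneg _).trans hWu
  rw [abs_of_nonneg hW0, abs_of_nonneg ((norm_nonneg _).trans hDy)]
  refine (norm_fderiv_comp_affine_sub_le_of_le hA hb (hfC1.differentiable one_ne_zero) hLf
    hWu hDy).trans ?_
  exact mul_le_mul_of_nonneg_right (by linarith) (by positivity)

/-- Joint Lipschitz continuity of the state-Jacobian of a CNN layer
`Λ(x,u) = f(A(u)x + b(u))`: for `A`, `b` Lipschitz, `‖A(u)‖ ≤ W` on `U`, and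
`f ∈ C¹` with Lipschitz derivative bounded by `D` at the relevant points, there is
a constant `C` with
`‖∂_x Λ(x,u) − ∂_x Λ(y,v)‖ ≤ C (W²‖x−y‖ + W‖y‖‖u−v‖ + ‖u−v‖)` on `X × U`. -/
theorem stmt_18 (m p : ℕ)
    (A : EuclideanSpace ℝ (Fin m) →
      (EuclideanSpace ℝ (Fin p) →L[ℝ] EuclideanSpace ℝ (Fin p)))
    (b : EuclideanSpace ℝ (Fin m) → EuclideanSpace ℝ (Fin p))
    (f : EuclideanSpace ℝ (Fin p) → EuclideanSpace ℝ (Fin p))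
    (U : Set (EuclideanSpace ℝ (Fin m))) (hU : IsCompact U)
    (X : Set (EuclideanSpace ℝ (Fin p))) (hX : Bornology.IsBounded X)
    (KA Kb Lf : NNReal) (W D : ℝ)
    (hA : LipschitzWith KA A) (hb : LipschitzWith Kb b)
    (hW : ∀ u ∈ U, ‖A u‖ ≤ W)
    (hfC1 : ContDiff ℝ 1 f)
    (hLf : LipschitzWith Lf (fderiv ℝ f))
    (hD : ∀ u ∈ U, ∀ x ∈ X, ‖fderiv ℝ f (A u x + b u)‖ ≤ D) :
    ∃ C > (0 : ℝ), ∀ x ∈ X, ∀ y ∈ X, ∀ u ∈ U, ∀ v ∈ U,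
      ‖fderiv ℝ (fun z => f (A u z + b u)) x -
        fderiv ℝ (fun z => f (A v z + b v)) y‖
        ≤ C * (W ^ 2 * ‖x - y‖ + W * ‖y‖ * ‖u - v‖ + ‖u - v‖) :=
  stmt_18_general m p A b f U X KA Kb Lf W D hA hb hW hfC1 hLf hD
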